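/- Let A be a multiset of positive integers in which 1 occurs exactly once and each positive integer j occurs at most j times. Then f_{A,a}(5)·f_{A,b}(5) > f_{A,a+b}(5) for all positive integers a, b with a + b > 2, and f_{A,1}(5)² ≥ f_{A,2}(5) with equality if and only if 2 occurs exactly twice in A. -/

import Mathlib

open scoped Classical

/-- Sum of those divisors of `j` that belong to the multiset of positive integers
with multiplicity function `μ`, counted with multiplicity: `σ_A(j) = ∑_{d ∣ j} d·μ(d)`. -/
noncomputable def sigmaA (μ : ℕ → ℕ) (j : ℕ) : ℕ := ∑ d ∈ Nat.divisors j, d * μ d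

/-- The polynomials `f_{A,n}(x)` associated with the multiset of positive integers
with multiplicity function `μ`, defined (equivalently to the generating function
`∑ f_{A,n}(x) qⁿ = ∏_{a∈A} (1/(1-q^a))^x`) by `f_{A,0} = 1` and the recurrence
`f_{A,n}(x) = (x/n) ∑_{j=1}^{n} σ_A(j) f_{A,n-j}(x)`. -/
noncomputable def fA (μ : ℕ → ℕ) : ℕ → ℝ → ℝ
  | 0, _ => 1
  | n + 1, x =>
      x / (n + 1) * ∑ j ∈ Finset.range (n + 1), (sigmaA μ (j + 1) : ℝ) * fA μ (n - j) x
  decreasing_by exact Nat.lt_succ_of_le (Nat.sub_le n j)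

/-- `f_{A,n}(x)` for an ordinary set `A` of positive integers. -/
noncomputable def fS (A : Set ℕ) : ℕ → ℝ → ℝ := fA (fun a => if a ∈ A then 1 else 0)

/-!
Write `f n = f_{A,n}(5)` and `σ_A = sigmaA μ`. By the recurrence `n f n = 5 ∑_{i<n} σ_A(n-i) f i`
and `1 ≤ σ_A(m)`, `f n` is at least its value `C(n+4,4)` for `A = {1}`. For `a ≤ b`, splitting
the recurrence for `f (a+b)` at `b` and using submultiplicativity for smaller index sums gives
`(a+b) (f a f b - f (a+b)) ≥ 5 ∑_{i<a} (f b - σ_A(a+b-i)) f i`. The right side is positive since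
`σ_A(m) ≤ σ₂(m) ≤ 2m² < C(b+4,4) ≤ f b` for `b < m < 2b` (checked by computation for `b < 9`).
The case `a = b = 1` is the identity `f 1 ^ 2 - f 2 = 5 (2 - μ 2)`.
-/

open Finset
open scoped ArithmeticFunction.sigma

lemma sigma_two_le_two_mul_sq (m : ℕ) : σ 2 m ≤ 2 * m ^ 2 := by
  suffices h : (σ 2 m : ℝ) ≤ 2 * m ^ 2 by exact_mod_cast h
  rw [ArithmeticFunction.sigma_apply, ← Nat.sum_div_divisors]
  push_cast
  calc ∑ d ∈ m.divisors, ((m / d : ℕ) : ℝ) ^ 2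
      = (m : ℝ) ^ 2 * ∑ d ∈ m.divisors, ((d : ℝ) ^ 2)⁻¹ := by
        rw [mul_sum]
        refine sum_congr rfl fun d hd => ?_
        have hd0 : (d : ℝ) ≠ 0 := by simp [Nat.ne_of_gt (Nat.pos_of_mem_divisors hd)]
        rw [Nat.cast_div (Nat.dvd_of_mem_divisors hd) hd0]
        ring
    _ ≤ (m : ℝ) ^ 2 * ∑ d ∈ Ioo 0 (m + 1), ((d : ℝ) ^ 2)⁻¹ := by
        refine mul_le_mul_of_nonneg_left (sum_le_sum_of_subset_of_nonneg (fun d hd => ?_)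
          (fun _ _ _ => by positivity)) (by positivity)
        exact mem_Ioo.2 ⟨Nat.pos_of_mem_divisors hd, Nat.lt_succ_of_le (Nat.divisor_le hd)⟩
    _ ≤ (m : ℝ) ^ 2 * (2 / (0 + 1)) := by
        gcongr
        exact_mod_cast sum_Ioo_inv_sq_le (α := ℝ) 0 (m + 1)
    _ = 2 * m ^ 2 := by ring

lemma eight_mul_sq_lt_choose {b : ℕ} (hb : 9 ≤ b) : 8 * b ^ 2 < (b + 4).choose 4 := by
  have h := Nat.descFactorial_eq_factorial_mul_choose (b + 4) 4
  norm_num [Nat.descFactorial_succ, Nat.factorial] at h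
  rw [show b + 4 - 3 = b + 1 by omega, show b + 4 - 2 = b + 2 by omega] at h
  have hb5 : 14 * b ≤ b * (b + 5) := by nlinarith
  nlinarith [Nat.mul_le_mul hb5 hb5]

lemma sigma_two_lt_choose {b m : ℕ} (hb : 2 ≤ b) (hbm : b < m) (hm : m < 2 * b) :
    σ 2 m < (b + 4).choose 4 := by
  rcases lt_or_ge b 9 with hb9 | hb9
  · have hsmall : ∀ b < 9, 2 ≤ b → ∀ m < 2 * b, b < m → σ 2 m < (b + 4).choose 4 := by decide
    exact hsmall b hb9 hb m hm hbm
  · have hsq : m ^ 2 ≤ (2 * b) ^ 2 := Nat.pow_le_pow_left hm.le 2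
    have := sigma_two_le_two_mul_sq m
    have := eight_mul_sq_lt_choose hb9
    nlinarith

lemma sigma_two_two_mul_add_lt_choose {b : ℕ} (hb : 2 ≤ b) :
    σ 2 (2 * b) + 5 * σ 2 (2 * b - 1) < 6 * (b + 4).choose 4 := by
  rcases lt_or_ge b 9 with hb9 | hb9
  · have hsmall : ∀ b < 9, 2 ≤ b →
        σ 2 (2 * b) + 5 * σ 2 (2 * b - 1) < 6 * (b + 4).choose 4 := by decide
    exact hsmall b hb9 hb
  · have hsq : (2 * b - 1) ^ 2 ≤ (2 * b) ^ 2 := Nat.pow_le_pow_left (Nat.sub_le _ _) 2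
    have := sigma_two_le_two_mul_sq (2 * b)
    have := sigma_two_le_two_mul_sq (2 * b - 1)
    have := eight_mul_sq_lt_choose hb9
    nlinarith

lemma sigmaA_two (μ : ℕ → ℕ) : sigmaA μ 2 = μ 1 + 2 * μ 2 := by
  rw [sigmaA, show Nat.divisors 2 = {1, 2} by decide]
  simp

lemma sigmaA_one (μ : ℕ → ℕ) : sigmaA μ 1 = μ 1 := by simp [sigmaA]

lemma fA_zero (μ : ℕ → ℕ) (x : ℝ) : fA μ 0 x = 1 := by rw [fA]

lemma fA_succ (μ : ℕ → ℕ) (n : ℕ) (x : ℝ) :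
    fA μ (n + 1) x =
      x / (n + 1) * ∑ j ∈ range (n + 1), (sigmaA μ (j + 1) : ℝ) * fA μ (n - j) x := by
  rw [fA]

lemma natCast_mul_fA (μ : ℕ → ℕ) (n : ℕ) (x : ℝ) :
    n * fA μ n x = x * ∑ i ∈ range n, (sigmaA μ (n - i) : ℝ) * fA μ i x := by
  rcases n with _ | n
  · simp
  rw [fA_succ]
  conv_rhs => rw [← sum_range_reflect]
  have hreflect : ∀ j ∈ range (n + 1), (sigmaA μ (n + 1 - (n + 1 - 1 - j)) : ℝ) *
      fA μ (n + 1 - 1 - j) x = (sigmaA μ (j + 1) : ℝ) * fA μ (n - j) x := fun j hj => by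
    rw [show n + 1 - (n + 1 - 1 - j) = j + 1 by simp at hj; omega,
      show n + 1 - 1 - j = n - j by omega]
  rw [sum_congr rfl hreflect]
  push_cast
  field_simp

section

variable {μ : ℕ → ℕ}

lemma one_le_sigmaA (hμ1 : 1 ≤ μ 1) {m : ℕ} (hm : m ≠ 0) : 1 ≤ sigmaA μ m :=
  hμ1.trans <| by
    rw [sigmaA]
    simpa using single_le_sum (f := fun d => d * μ d) (fun _ _ => Nat.zero_le _)
      (Nat.one_mem_divisors.2 hm)

lemma sigmaA_le_sigma_two (hμ : ∀ j, μ j ≤ j) (m : ℕ) : sigmaA μ m ≤ σ 2 m := by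
  rw [ArithmeticFunction.sigma_apply, sigmaA]
  exact sum_le_sum fun d _ => by rw [sq]; exact Nat.mul_le_mul_left d (hμ d)

lemma fA_nonneg {x : ℝ} (hx : 0 ≤ x) (n : ℕ) : 0 ≤ fA μ n x := by
  induction n using Nat.strong_induction_on with
  | _ n ih =>
    rcases n with _ | n
    · simp [fA_zero]
    rw [fA_succ]
    exact mul_nonneg (by positivity)
      (sum_nonneg fun j _ => mul_nonneg (Nat.cast_nonneg _) (ih _ (by omega)))

lemma choose_le_fA (hμ1 : 1 ≤ μ 1) (k n : ℕ) : ((n + k).choose k : ℝ) ≤ fA μ n (k + 1) := by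
  induction n using Nat.strong_induction_on with
  | _ n ih =>
    rcases n with _ | m
    · simp [fA_zero]
    have hhockey : ((m + 1 : ℕ) : ℝ) * (m + 1 + k).choose k =
        (k + 1) * ∑ i ∈ range (m + 1), ((i + k).choose k : ℝ) := by
      have h := Nat.choose_succ_right_eq (m + 1 + k) k
      have hsum := Nat.sum_range_add_choose m k
      rw [Nat.add_right_comm m k 1] at hsum
      rw [Nat.add_sub_cancel, ← hsum] at h
      exact_mod_cast by linarith
    refine le_of_mul_le_mul_left ?_ (by positivity : (0 : ℝ) < ((m + 1 : ℕ) : ℝ))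
    rw [hhockey, natCast_mul_fA]
    refine mul_le_mul_of_nonneg_left (sum_le_sum fun i hi => ?_) (by positivity)
    have hσ : (1 : ℝ) ≤ sigmaA μ (m + 1 - i) := by
      exact_mod_cast one_le_sigmaA hμ1 (by simp at hi; omega)
    calc ((i + k).choose k : ℝ) ≤ fA μ i (k + 1) := ih i (by simp at hi; omega)
      _ ≤ sigmaA μ (m + 1 - i) * fA μ i (k + 1) :=
        le_mul_of_one_le_left (fA_nonneg (by positivity) i) hσ

lemma mul_sum_fA_le (hμ1 : 1 ≤ μ 1) {x : ℝ} (hx : 0 ≤ x) (n : ℕ) :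
    x * ∑ i ∈ range n, fA μ i x ≤ n * fA μ n x := by
  rw [natCast_mul_fA]
  refine mul_le_mul_of_nonneg_left (sum_le_sum fun i hi => ?_) hx
  have hσ : (1 : ℝ) ≤ sigmaA μ (n - i) := by
    exact_mod_cast one_le_sigmaA hμ1 (by simp at hi; omega)
  exact le_mul_of_one_le_left (fA_nonneg hx i) hσ

lemma mul_sum_sub_le_mul_fA_sub (hμ1 : 1 ≤ μ 1) {x : ℝ} (hx : 0 ≤ x) {a b : ℕ}
    (hle : ∀ k < b, fA μ (a + k) x ≤ fA μ a x * fA μ k x) :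
    x * ∑ i ∈ range a, (fA μ b x - sigmaA μ (a + b - i)) * fA μ i x ≤
      (a + b) * (fA μ a x * fA μ b x - fA μ (a + b) x) := by
  have hsplit : ((a + b : ℕ) : ℝ) * fA μ (a + b) x =
      x * ∑ i ∈ range a, (sigmaA μ (a + b - i) : ℝ) * fA μ i x +
        x * ∑ k ∈ range b, (sigmaA μ (b - k) : ℝ) * fA μ (a + k) x := by
    rw [natCast_mul_fA, sum_range_add, mul_add]
    simp only [Nat.add_sub_add_left]
  have hhead : x * ∑ k ∈ range b, (sigmaA μ (b - k) : ℝ) * fA μ (a + k) x ≤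
      fA μ a x * (b * fA μ b x) := by
    calc x * ∑ k ∈ range b, (sigmaA μ (b - k) : ℝ) * fA μ (a + k) x
        ≤ x * ∑ k ∈ range b, (sigmaA μ (b - k) : ℝ) * (fA μ a x * fA μ k x) := by
          refine mul_le_mul_of_nonneg_left (sum_le_sum fun k hk => ?_) hx
          exact mul_le_mul_of_nonneg_left (hle k (by simpa using hk)) (Nat.cast_nonneg _)
      _ = fA μ a x * (x * ∑ k ∈ range b, (sigmaA μ (b - k) : ℝ) * fA μ k x) := by
          simp_rw [mul_sum]
          exact sum_congr rfl fun _ _ => by ring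
      _ = fA μ a x * (b * fA μ b x) := by rw [natCast_mul_fA]
  have htail := mul_le_mul_of_nonneg_left (mul_sum_fA_le hμ1 hx a) (fA_nonneg (μ := μ) hx b)
  simp only [sub_mul, sum_sub_distrib, ← mul_sum, mul_sub] at htail ⊢
  push_cast at hsplit
  linarith

lemma fA_one (hμ1 : μ 1 = 1) (x : ℝ) : fA μ 1 x = x := by
  simpa [fA_zero, sigmaA_one, hμ1] using fA_succ μ 0 x

lemma fA_one_mul_self_sub_fA_two (hμ1 : μ 1 = 1) (x : ℝ) :
    fA μ 1 x * fA μ 1 x - fA μ 2 x = x * (x - 1 - 2 * μ 2) / 2 := by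
  rw [fA_one hμ1, show fA μ 2 x = _ from fA_succ μ 1 x]
  simp [sum_range_succ, fA_zero, fA_one hμ1, sigmaA_one, sigmaA_two, hμ1]
  ring

lemma fA_two_le_fA_one_mul_self (hμ1 : μ 1 = 1) (hμ2 : μ 2 ≤ 2) :
    fA μ 2 5 ≤ fA μ 1 5 * fA μ 1 5 := by
  have h := fA_one_mul_self_sub_fA_two hμ1 5
  have : (μ 2 : ℝ) ≤ 2 := by exact_mod_cast hμ2
  linarith

lemma choose_four_le_fA (hμ1 : 1 ≤ μ 1) (n : ℕ) : ((n + 4).choose 4 : ℝ) ≤ fA μ n 5 := by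
  have h := choose_le_fA hμ1 4 n
  norm_num at h
  exact h

lemma fA_pos (hμ1 : 1 ≤ μ 1) (n : ℕ) : 0 < fA μ n 5 :=
  (Nat.cast_pos.2 (Nat.choose_pos (by omega))).trans_le (choose_four_le_fA hμ1 n)

lemma sigmaA_lt_fA (hμ1 : 1 ≤ μ 1) (hμ : ∀ j, μ j ≤ j) {b m : ℕ} (hb : 2 ≤ b) (hbm : b < m)
    (hm : m < 2 * b) : (sigmaA μ m : ℝ) < fA μ b 5 := by
  have h : sigmaA μ m < (b + 4).choose 4 :=
    (sigmaA_le_sigma_two hμ m).trans_lt (sigma_two_lt_choose hb hbm hm)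
  exact (Nat.cast_lt.2 h).trans_le (choose_four_le_fA hμ1 b)

lemma sum_fA_sub_sigmaA_mul_fA_pos (hμ1 : μ 1 = 1) (hμ : ∀ j, μ j ≤ j) {a b : ℕ} (ha : 1 ≤ a)
    (hab : a ≤ b) (hb : 2 ≤ b) :
    0 < ∑ i ∈ range a, (fA μ b 5 - sigmaA μ (a + b - i)) * fA μ i 5 := by
  have hterm : ∀ i, 0 < i ∨ a < b → i < a →
      0 < (fA μ b 5 - sigmaA μ (a + b - i)) * fA μ i 5 := fun i hi hia =>
    mul_pos (sub_pos.2 (sigmaA_lt_fA hμ1.ge hμ hb (by omega) (by omega))) (fA_pos hμ1.ge i)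
  rcases hab.lt_or_eq with hlt | rfl
  · exact sum_pos (fun i hi => hterm i (Or.inr hlt) (by simpa using hi)) ⟨0, mem_range.2 ha⟩
  obtain ⟨c, rfl⟩ : ∃ c, a = c + 2 := ⟨a - 2, by omega⟩
  rw [sum_range_succ', sum_range_succ']
  have hrest := sum_nonneg fun i (hi : i ∈ range c) =>
    (hterm (i + 1 + 1) (Or.inl (by omega)) (by simp at hi; omega)).le
  -- `σ_A(2b)` may exceed `f b`; the term `i = 1`, of weight `f 1 = 5`, compensates for it.
  have hpair : sigmaA μ (2 * (c + 2)) + 5 * sigmaA μ (2 * (c + 2) - 1) <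
      6 * (c + 2 + 4).choose 4 :=
    (add_le_add (sigmaA_le_sigma_two hμ _)
      (Nat.mul_le_mul_left 5 (sigmaA_le_sigma_two hμ _))).trans_lt
      (sigma_two_two_mul_add_lt_choose (by omega))
  have hpair' : ((sigmaA μ (2 * (c + 2)) + 5 * sigmaA μ (2 * (c + 2) - 1) : ℕ) : ℝ) <
      6 * fA μ (c + 2) 5 :=
    (Nat.cast_lt.2 hpair).trans_le (by push_cast; linarith [choose_four_le_fA hμ1.ge (c + 2)])
  rw [show c + 2 + (c + 2) - (0 + 1) = 2 * (c + 2) - 1 by omega,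
    show c + 2 + (c + 2) - 0 = 2 * (c + 2) by omega, zero_add, fA_one hμ1, fA_zero]
  push_cast at hpair'
  linarith

theorem fA_add_lt_mul (hμ1 : μ 1 = 1) (hμ : ∀ j, μ j ≤ j) {a b : ℕ} (ha : 1 ≤ a)
    (hb : 1 ≤ b) (hab : 3 ≤ a + b) : fA μ (a + b) 5 < fA μ a 5 * fA μ b 5 := by
  induction hn : a + b using Nat.strong_induction_on generalizing a b with
  | _ n ih =>
  subst hn
  wlog hle : a ≤ b generalizing a b
  · rw [add_comm, mul_comm]
    exact this hb ha (by omega) (fun m hm => ih m (by omega)) (by omega)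
  have hsub : ∀ k < b, fA μ (a + k) 5 ≤ fA μ a 5 * fA μ k 5 := by
    intro k hk
    rcases Nat.eq_zero_or_pos k with rfl | hk0
    · simp [fA_zero]
    rcases lt_or_ge (a + k) 3 with hsmall | hlarge
    · obtain ⟨rfl, rfl⟩ : a = 1 ∧ k = 1 := by omega
      exact fA_two_le_fA_one_mul_self hμ1 (hμ 2)
    · exact (ih (a + k) (by omega) ha hk0 hlarge rfl).le
  have hpos := sum_fA_sub_sigmaA_mul_fA_pos hμ1 hμ ha hle (by omega)
  have hkey := mul_sum_sub_le_mul_fA_sub hμ1.ge (by norm_num : (0 : ℝ) ≤ 5) hsub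
  exact sub_pos.1 <|
    pos_of_mul_pos_right ((mul_pos (by norm_num) hpos).trans_le hkey) (by positivity)

end

/-- Bessenrodt-Ono inequality at x = 5 for a multiset A of positive integers in which 1 occurs exactly once and each j occurs at most j times: f_{A,a}(5) f_{A,b}(5) > f_{A,a+b}(5) for a + b > 2, and f_{A,1}(5)^2 >= f_{A,2}(5) with equality iff 2 occurs exactly twice in A. -/
theorem stmt_16 (μ : ℕ → ℕ) (hμ1 : μ 1 = 1) (hμ : ∀ j, μ j ≤ j) :
    (∀ a b : ℕ, 1 ≤ a → 1 ≤ b → 2 < a + b → fA μ a 5 * fA μ b 5 > fA μ (a + b) 5) ∧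
    fA μ 1 5 * fA μ 1 5 ≥ fA μ 2 5 ∧
    (fA μ 1 5 * fA μ 1 5 = fA μ 2 5 ↔ μ 2 = 2) := by
  refine ⟨fun a b ha hb hab => fA_add_lt_mul hμ1 hμ ha hb hab,
    fA_two_le_fA_one_mul_self hμ1 (hμ 2), ?_⟩
  rw [← sub_eq_zero, fA_one_mul_self_sub_fA_two hμ1]
  constructor
  · intro h
    exact_mod_cast (by linarith : (μ 2 : ℝ) = 2)
  · intro h
    rw [h]
    norm_num
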